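/- arXiv:2211.04105 — 5 statements merged into one kernel-verified Lean document; each statement's English description precedes it below -/
import Mathlib

section
/- In the uncapacitated single-market production-distribution game, the imputation x defined by x_i = α_1 · λ_i for all i ∈ N (where α_1 = max_{i∈N} α_i) lies in the core of the game (N, v); in particular the core is nonempty. -/
/-! No coalition earns more than `α_1` per unit of its demand, and the grand coalition earns
exactly that, so paying every player `α_1` per unit of its own demand is efficient and
satisfies every coalition. -/

theorem Finset.sup'_eq_of_mem_of_forall_le {ι β : Type*} [SemilatticeSup β] {s : Finset ι}
    {f : ι → β} {i₀ : ι} (h₀ : i₀ ∈ s) (hle : ∀ i ∈ s, f i ≤ f i₀) :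
    s.sup' ⟨i₀, h₀⟩ f = f i₀ :=
  le_antisymm (Finset.sup'_le _ _ hle) (Finset.le_sup' f h₀)

theorem singleMarketValue_le_mul_sum {ι : Type*} {α lam : ι → ℝ} {v : Finset ι → ℝ}
    (hlam : ∀ i, 0 ≤ lam i) (hv : ∀ S (hS : S.Nonempty), v S = S.sup' hS α * ∑ i ∈ S, lam i)
    (hv0 : v ∅ = 0) {c : ℝ} (hc : ∀ i, α i ≤ c) (S : Finset ι) :
    v S ≤ c * ∑ i ∈ S, lam i := by
  rcases S.eq_empty_or_nonempty with rfl | hS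
  · simp [hv0]
  · rw [hv S hS]
    exact mul_le_mul_of_nonneg_right (Finset.sup'_le _ _ fun i _ => hc i)
      (Finset.sum_nonneg fun i _ => hlam i)

theorem uncap_single_market_core_general {n : ℕ} (hn : 0 < n) (α lam : Fin n → ℝ)
    (hmono : ∀ i j : Fin n, i ≤ j → α j ≤ α i)
    (hlam : ∀ i, 0 ≤ lam i)
    (v : Finset (Fin n) → ℝ)
    (hv : ∀ (S : Finset (Fin n)) (hS : S.Nonempty),
        v S = (S.sup' hS α) * ∑ i ∈ S, lam i)
    (hv0 : v ∅ = 0)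
    (x : Fin n → ℝ) (hx : ∀ i, x i = α ⟨0, hn⟩ * lam i) :
    (∑ i, x i = v Finset.univ) ∧ ∀ S : Finset (Fin n), v S ≤ ∑ i ∈ S, x i := by
  have hmax : ∀ i, α i ≤ α ⟨0, hn⟩ := fun i => hmono _ i (Nat.zero_le _)
  have hxS : ∀ S : Finset (Fin n), ∑ i ∈ S, x i = α ⟨0, hn⟩ * ∑ i ∈ S, lam i := fun S => by
    simp only [hx, Finset.mul_sum]
  refine ⟨?_, fun S => hxS S ▸ singleMarketValue_le_mul_sum hlam hv hv0 hmax S⟩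
  rw [hxS, hv _ ⟨⟨0, hn⟩, Finset.mem_univ _⟩,
    Finset.sup'_eq_of_mem_of_forall_le (Finset.mem_univ _) fun i _ => hmax i]

/-- In the uncapacitated single-market production-distribution game, the imputation
`x_i = α_1 · λ_i` (where `α_1 = max_i α_i`) lies in the core; in particular the core is
nonempty. -/
theorem uncap_single_market_core {n : ℕ} (hn : 0 < n) (α lam : Fin n → ℝ)
    (hmono : ∀ i j : Fin n, i ≤ j → α j ≤ α i) (hα : ∀ i, 0 ≤ α i)
    (hlam : ∀ i, 0 ≤ lam i) (hsum : ∑ i, lam i = 1)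
    (v : Finset (Fin n) → ℝ)
    (hv : ∀ (S : Finset (Fin n)) (hS : S.Nonempty),
        v S = (S.sup' hS α) * ∑ i ∈ S, lam i)
    (hv0 : v ∅ = 0)
    (x : Fin n → ℝ) (hx : ∀ i, x i = α ⟨0, hn⟩ * lam i) :
    (∑ i, x i = v Finset.univ) ∧ ∀ S : Finset (Fin n), v S ≤ ∑ i ∈ S, x i :=
  uncap_single_market_core_general hn α lam hmono hlam v hv hv0 x hx
end

section
/- In the uncapacitated multi-market production-distribution game with value function v(S) = Σ_{j∈M} (max_{i∈S} α_{ij}) · (Σ_{i∈S} d_{ij}) for nonempty S and v(∅) = 0, the imputation x defined by x_i = Σ_{j∈M} α*_j · d_{ij}, where α*_j = max_{i∈N} α_{ij}, lies in the core of (N, v); in particular the core of the uncapacitated multi-market production-distribution game is nonempty. -/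
/-! Each coalition `S` sells its pooled demand `∑_{i∈S} d_{ij}` at its best margin on market `j`,
which is at most the grand coalition's best margin `α*_j`. Paying every player its own demand at the
margins `α*_j` therefore gives `S` exactly the value it would have at those margins, which is at least
`v(S)`, with equality for `S = N`. -/

open Finset

theorem sum_sum_mul_eq_sum_mul_sum {N M R : Type} [Fintype M] [CommSemiring R]
    (S : Finset N) (c : M → R) (d : N → M → R) :
    ∑ i ∈ S, ∑ j, c j * d i j = ∑ j, c j * ∑ i ∈ S, d i j := by
  simp only [mul_sum]
  exact sum_comm

theorem sum_sup'_mul_le_of_subset {N M : Type} [Fintype M] (α d : N → M → ℝ)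
    (hd : ∀ i j, 0 ≤ d i j) {S T : Finset N} (hST : S ⊆ T) (hS : S.Nonempty) :
    ∑ j, (S.sup' hS fun i => α i j) * ∑ i ∈ S, d i j
      ≤ ∑ j, (T.sup' (hS.mono hST) fun i => α i j) * ∑ i ∈ S, d i j :=
  sum_le_sum fun j _ =>
    mul_le_mul_of_nonneg_right (sup'_mono _ hST hS) (sum_nonneg fun i _ => hd i j)

theorem uncap_multi_market_core_general {N M : Type} [Fintype N] [Fintype M] [Nonempty N]
    (α d : N → M → ℝ) (hd : ∀ i j, 0 ≤ d i j)
    (v : Finset N → ℝ)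
    (hv : ∀ (S : Finset N) (hS : S.Nonempty),
        v S = ∑ j, (S.sup' hS fun i => α i j) * ∑ i ∈ S, d i j)
    (hv0 : v ∅ = 0)
    (x : N → ℝ)
    (hx : ∀ i, x i = ∑ j, (Finset.univ.sup' Finset.univ_nonempty fun i' => α i' j) * d i j) :
    (∑ i, x i = v Finset.univ) ∧ ∀ S : Finset N, v S ≤ ∑ i ∈ S, x i := by
  have hxS : ∀ S : Finset N, ∑ i ∈ S, x i
      = ∑ j, (univ.sup' univ_nonempty fun i' => α i' j) * ∑ i ∈ S, d i j := fun S => by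
    simp only [hx]
    exact sum_sum_mul_eq_sum_mul_sum S _ d
  refine ⟨by rw [hxS, hv univ univ_nonempty], fun S => ?_⟩
  rcases S.eq_empty_or_nonempty with rfl | hS
  · simp [hv0]
  · rw [hv S hS, hxS]
    exact sum_sup'_mul_le_of_subset α d hd (subset_univ S) hS

/-- In the uncapacitated multi-market production-distribution game, the imputation
`x_i = Σ_{j∈M} α*_j · d_{ij}` with `α*_j = max_{i∈N} α_{ij}` lies in the core; in
particular the core is nonempty. -/
theorem uncap_multi_market_core {N M : Type} [Fintype N] [Fintype M] [Nonempty N]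
    (α d : N → M → ℝ) (hα : ∀ i j, 0 ≤ α i j) (hd : ∀ i j, 0 ≤ d i j)
    (v : Finset N → ℝ)
    (hv : ∀ (S : Finset N) (hS : S.Nonempty),
        v S = ∑ j, (S.sup' hS fun i => α i j) * ∑ i ∈ S, d i j)
    (hv0 : v ∅ = 0)
    (x : N → ℝ)
    (hx : ∀ i, x i = ∑ j, (Finset.univ.sup' Finset.univ_nonempty fun i' => α i' j) * d i j) :
    (∑ i, x i = v Finset.univ) ∧ ∀ S : Finset N, v S ≤ ∑ i ∈ S, x i :=
  uncap_multi_market_core_general α d hd v hv hv0 x hx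
end

section
/- Let N = {1,…,n}, let v : 2^N → ℝ, let F ⊆ N with 1 ∉ F, and let 𝓕 = {S ⊆ N : S ⊆ F or N∖F ⊆ S}. Let x ∈ ℝ^n and ε ∈ ℝ satisfy x(N∖{i}) = v(N∖{i}) + ε for every i ∉ F with i ≠ 1. Suppose there exists S̄ ⊆ N with S̄ ∉ 𝓕, 1 ∉ S̄, and x(S̄) = v(S̄) + ε. Then there exists y : 2^N → ℝ such that: (a) Σ_{S⊆N} y_S · χ^S = 0 (where χ^S ∈ ℝ^n is the characteristic vector of S); (b) Σ_{S ∉ 𝓕} y_S > 0; (c) y_S ≥ 0 for every S ∉ 𝓕; (d) y_S = 0 for every S ∉ 𝓕 with x(S) > v(S) + ε. -/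
/-!
The restricted primal only asks for a signed combination of coalitions whose characteristic
vectors cancel, with nonnegative weight on the tight coalitions outside `𝓕`. The identity
`χ^T + ∑_{j ∈ T} χ^{N ∖ {j}} = |T| · χ^N` provides one: put weight `1` on `S̄` and on every
`N ∖ {j}` with `j ∈ S̄`, and weight `-|S̄|` on `N ∈ 𝓕`. Each `N ∖ {j}` with `j ∈ S̄` is either in
`𝓕` (when `j ∈ F`) or tight by hypothesis (since `j ≠ 1`), so no slack coalition receives weight.
-/

open Finset

section BalancingWeights

variable {α : Type*} [Fintype α] [DecidableEq α]

noncomputable def balancingWeights (T : Finset α) : Finset α → ℝ :=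
  Pi.single T 1 + ∑ j ∈ T, Pi.single (univ.erase j) 1 - Pi.single univ (#T : ℝ)

lemma sum_filter_mem_balancingWeights_eq_zero (T : Finset α) (i : α) :
    ∑ S ∈ univ.filter (i ∈ ·), balancingWeights T S = 0 := by
  have hcard : #(T.filter (fun j => i ∈ univ.erase j)) + (if i ∈ T then 1 else 0) = #T := by
    rw [filter_congr (q := (· ≠ i)) (by simp [eq_comm]), filter_ne' T i]
    split_ifs with hi
    · exact card_erase_add_one hi
    · rw [erase_eq_of_notMem hi, add_zero]
  simp only [balancingWeights, Pi.add_apply, Pi.sub_apply, Finset.sum_apply, sum_add_distrib,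
    sum_sub_distrib, sum_comm (s := univ.filter (i ∈ ·)), sum_pi_single', mem_filter, mem_univ,
    true_and, sum_boole]
  rw [← hcard]
  push_cast
  ring

variable {T S : Finset α}

lemma balancingWeights_apply_of_ne_univ (hS : S ≠ univ) :
    balancingWeights T S = (Pi.single T 1 : Finset α → ℝ) S +
      ∑ j ∈ T, (Pi.single (univ.erase j) 1 : Finset α → ℝ) S := by
  simp [balancingWeights, Pi.single_apply, hS]

lemma balancingWeights_nonneg (hS : S ≠ univ) : 0 ≤ balancingWeights T S := by
  rw [balancingWeights_apply_of_ne_univ hS]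
  have hsingle (U : Finset α) : 0 ≤ (Pi.single U 1 : Finset α → ℝ) S := by
    rw [Pi.single_apply]
    positivity
  exact add_nonneg (hsingle T) (sum_nonneg fun j _ => hsingle _)

lemma balancingWeights_eq_zero (hS : S ≠ univ) (hST : S ≠ T)
    (herase : ∀ j ∈ T, S ≠ univ.erase j) : balancingWeights T S = 0 := by
  rw [balancingWeights_apply_of_ne_univ hS, Pi.single_eq_of_ne hST, zero_add]
  exact sum_eq_zero fun j hj => Pi.single_eq_of_ne (herase j hj) _

lemma balancingWeights_self (hT : T ≠ univ) : balancingWeights T T = 1 := by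
  rw [balancingWeights_apply_of_ne_univ hT, Pi.single_eq_same, add_eq_left]
  refine sum_eq_zero fun j hj => Pi.single_eq_of_ne ?_ _
  rintro rfl
  simp at hj

end BalancingWeights

theorem restricted_primal_value_zero_general {n : ℕ} (hn : 0 < n)
    (v : Finset (Fin n) → ℝ)
    (F : Finset (Fin n))
    (x : Fin n → ℝ) (ε : ℝ)
    (hx : ∀ i : Fin n, i ∉ F → i ≠ ⟨0, hn⟩ →
      ∑ k ∈ Finset.univ.erase i, x k = v (Finset.univ.erase i) + ε)
    (Sbar : Finset (Fin n))
    (hSbarF : ¬(Sbar ⊆ F ∨ Finset.univ \ F ⊆ Sbar))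
    (h1Sbar : (⟨0, hn⟩ : Fin n) ∉ Sbar)
    (hxSbar : ∑ k ∈ Sbar, x k = v Sbar + ε) :
    ∃ y : Finset (Fin n) → ℝ,
      (∀ i : Fin n, (∑ S : Finset (Fin n), if i ∈ S then y S else 0) = 0) ∧
      (0 < ∑ S ∈ Finset.univ.filter
          (fun S : Finset (Fin n) => ¬(S ⊆ F ∨ Finset.univ \ F ⊆ S)), y S) ∧
      (∀ S : Finset (Fin n), ¬(S ⊆ F ∨ Finset.univ \ F ⊆ S) → 0 ≤ y S) ∧
      (∀ S : Finset (Fin n), ¬(S ⊆ F ∨ Finset.univ \ F ⊆ S) →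
        v S + ε < ∑ k ∈ S, x k → y S = 0) := by
  have ne_univ {S : Finset (Fin n)} (hS : ¬(S ⊆ F ∨ univ \ F ⊆ S)) : S ≠ univ := by
    rintro rfl
    exact hS (Or.inr (subset_univ _))
  have hSbar : balancingWeights Sbar Sbar = 1 :=
    balancingWeights_self fun h => h1Sbar (h ▸ mem_univ _)
  refine ⟨balancingWeights Sbar, fun i => ?_, ?_,
    fun S hS => balancingWeights_nonneg (ne_univ hS), fun S hS hslack => ?_⟩
  · rw [← sum_filter]
    exact sum_filter_mem_balancingWeights_eq_zero Sbar i
  · refine sum_pos' (fun S hS => balancingWeights_nonneg (ne_univ (mem_filter.1 hS).2)) ?_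
    exact ⟨Sbar, mem_filter.2 ⟨mem_univ _, hSbarF⟩, hSbar ▸ one_pos⟩
  · refine balancingWeights_eq_zero (ne_univ hS) (by rintro rfl; linarith) ?_
    rintro j hj rfl
    by_cases hjF : j ∈ F
    · refine hS (Or.inr fun k hk => mem_erase.2 ⟨?_, mem_univ k⟩)
      rintro rfl
      exact (mem_sdiff.1 hk).2 hjF
    · have := hx j hjF (by rintro rfl; exact h1Sbar hj)
      linarith

/-- If the current solution `(x, ε)` of the leastcore LP has a tight coalition `S̄ ∉ 𝓕`
avoiding player 1, then the restricted primal of the primal-dual algorithm has a feasible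
solution `y` of value `0` (witnessing optimality of `(x, ε)`). -/
theorem restricted_primal_value_zero {n : ℕ} (hn : 0 < n)
    (v : Finset (Fin n) → ℝ)
    (F : Finset (Fin n)) (h1F : (⟨0, hn⟩ : Fin n) ∉ F)
    (x : Fin n → ℝ) (ε : ℝ)
    (hx : ∀ i : Fin n, i ∉ F → i ≠ ⟨0, hn⟩ →
      ∑ k ∈ Finset.univ.erase i, x k = v (Finset.univ.erase i) + ε)
    (Sbar : Finset (Fin n))
    (hSbarF : ¬(Sbar ⊆ F ∨ Finset.univ \ F ⊆ Sbar))
    (h1Sbar : (⟨0, hn⟩ : Fin n) ∉ Sbar)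
    (hxSbar : ∑ k ∈ Sbar, x k = v Sbar + ε) :
    ∃ y : Finset (Fin n) → ℝ,
      (∀ i : Fin n, (∑ S : Finset (Fin n), if i ∈ S then y S else 0) = 0) ∧
      (0 < ∑ S ∈ Finset.univ.filter
          (fun S : Finset (Fin n) => ¬(S ⊆ F ∨ Finset.univ \ F ⊆ S)), y S) ∧
      (∀ S : Finset (Fin n), ¬(S ⊆ F ∨ Finset.univ \ F ⊆ S) → 0 ≤ y S) ∧
      (∀ S : Finset (Fin n), ¬(S ⊆ F ∨ Finset.univ \ F ⊆ S) →
        v S + ε < ∑ k ∈ S, x k → y S = 0) :=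
  restricted_primal_value_zero_general hn v F x ε hx Sbar hSbarF h1Sbar hxSbar
end

section
/- Let N = {1,…,n}, let F ⊆ N with 1 ∉ F and F ≠ N∖{1}, and let 𝓕 = {S ⊆ N : S ⊆ F or N∖F ⊆ S}. Define x̃ ∈ ℝ^n by x̃_1 = n − 1 − |F|, x̃_i = −1 for every i ∉ F with i ≠ 1, and x̃_i = 0 for every i ∈ F. Then: (a) x̃(S) = 0 for every S ∈ 𝓕; and (b) x̃(S) ≥ 1 for every S ⊆ N with 1 ∈ S and S ∉ 𝓕. -/
/-! Writing `z` for player 1, the vector is `x̃ = |N ∖ F| • δ_z - 𝟙_{N ∖ F}`. Hence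
`x̃(S) = |(N ∖ F) ∖ S|` when `z ∈ S` and `x̃(S) = -|S ∖ F|` when `z ∉ S`: both vanish on `𝓕`,
and the first is a positive integer as soon as `N ∖ F ⊄ S`. -/

open Finset

section

variable {ι : Type*} [DecidableEq ι]

lemma sum_ite_eq_sub_ite_mem (S F : Finset ι) (z : ι) (c : ℝ) :
    ∑ i ∈ S, ((if i = z then c else 0) - if i ∈ F then 0 else 1) =
      (if z ∈ S then c else 0) - #(S \ F) := by
  rw [sum_sub_distrib, sum_ite_eq', sum_ite, sum_const_zero, zero_add, sum_const,
    nsmul_one, filter_not, filter_mem_eq_inter, sdiff_inter_self_left]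

variable [Fintype ι] {F S : Finset ι} {z : ι} {x : ι → ℝ}
  (hx : ∀ i, x i = (if i = z then (#Fᶜ : ℝ) else 0) - if i ∈ F then 0 else 1)
include hx

lemma sum_eq_card_compl_sdiff (hzS : z ∈ S) : ∑ i ∈ S, x i = #(Fᶜ \ S) := by
  have hcard : #(Fᶜ \ S) + #(S \ F) = #Fᶜ := by
    rw [sdiff_eq_inter_compl S, inter_comm S, card_sdiff_add_card_inter]
  rw [sum_congr rfl fun i _ => hx i, sum_ite_eq_sub_ite_mem, if_pos hzS, ← hcard]
  push_cast
  ring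

lemma sum_eq_neg_card_sdiff (hzS : z ∉ S) : ∑ i ∈ S, x i = -#(S \ F) := by
  rw [sum_congr rfl fun i _ => hx i, sum_ite_eq_sub_ite_mem, if_neg hzS, zero_sub]

end

theorem drp_optimal_solution_general {n : ℕ} (hn : 0 < n) (F : Finset (Fin n))
    (h1F : (⟨0, hn⟩ : Fin n) ∉ F)
    (xt : Fin n → ℝ)
    (hxt : ∀ i : Fin n, xt i =
      if i = (⟨0, hn⟩ : Fin n) then (n : ℝ) - 1 - F.card
      else if i ∈ F then 0 else -1) :
    (∀ S : Finset (Fin n), (S ⊆ F ∨ Finset.univ \ F ⊆ S) → ∑ i ∈ S, xt i = 0) ∧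
    (∀ S : Finset (Fin n), (⟨0, hn⟩ : Fin n) ∈ S →
      ¬(S ⊆ F ∨ Finset.univ \ F ⊆ S) → 1 ≤ ∑ i ∈ S, xt i) := by
  set z : Fin n := ⟨0, hn⟩
  have hx : ∀ i, xt i = (if i = z then (#Fᶜ : ℝ) else 0) - if i ∈ F then 0 else 1 := by
    intro i
    rw [hxt i, card_compl, Fintype.card_fin,
      Nat.cast_sub (F.card_le_univ.trans_eq (Fintype.card_fin n))]
    split_ifs with hiz hiF
    · exact absurd (hiz ▸ hiF) h1F
    all_goals ring
  simp only [← compl_eq_univ_sdiff]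
  refine ⟨fun S hS => ?_, fun S hzS hS => ?_⟩
  · rcases hS with hSF | hFS
    · rw [sum_eq_neg_card_sdiff hx fun hzS => h1F (hSF hzS), sdiff_eq_empty_iff_subset.2 hSF,
        card_empty, Nat.cast_zero, neg_zero]
    · rw [sum_eq_card_compl_sdiff hx (hFS (mem_compl.2 h1F)), sdiff_eq_empty_iff_subset.2 hFS,
        card_empty, Nat.cast_zero]
  · rw [sum_eq_card_compl_sdiff hx hzS, Nat.one_le_cast, one_le_card]
    exact sdiff_nonempty.2 fun hFS => hS (Or.inr hFS)

/-- The vector `x̃` with `x̃_1 = n − 1 − |F|`, `x̃_i = −1` for `i ∉ F`, `i ≠ 1`, and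
`x̃_i = 0` for `i ∈ F` satisfies `x̃(S) = 0` for all `S ∈ 𝓕` and `x̃(S) ≥ 1` for all
`S ∉ 𝓕` containing player 1. -/
theorem drp_optimal_solution {n : ℕ} (hn : 0 < n) (F : Finset (Fin n))
    (h1F : (⟨0, hn⟩ : Fin n) ∉ F) (hF : F ≠ Finset.univ.erase (⟨0, hn⟩ : Fin n))
    (xt : Fin n → ℝ)
    (hxt : ∀ i : Fin n, xt i =
      if i = (⟨0, hn⟩ : Fin n) then (n : ℝ) - 1 - F.card
      else if i ∈ F then 0 else -1) :
    (∀ S : Finset (Fin n), (S ⊆ F ∨ Finset.univ \ F ⊆ S) → ∑ i ∈ S, xt i = 0) ∧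
    (∀ S : Finset (Fin n), (⟨0, hn⟩ : Fin n) ∈ S →
      ¬(S ⊆ F ∨ Finset.univ \ F ⊆ S) → 1 ≤ ∑ i ∈ S, xt i) :=
  drp_optimal_solution_general hn F h1F xt hxt
end

section
/- Let E be a finite set, let P = {1,…,p} ⊆ E, let M ⊆ E with M ∩ P = ∅, and let V be a finite family of vectors in ℝ^E. Define 𝓕 := {S ⊆ P : χ^{S∪M} ∈ span(V)}, where χ^T ∈ ℝ^E denotes the characteristic vector of T ⊆ E. Let 0 ≤ j̄ ≤ p and S̄ = {1,…,j̄}, and suppose S̄ ∈ 𝓕. Let integers l̲ and l̄ satisfy 1 ≤ l̲ ≤ j̄ + 1 and j̄ ≤ l̄ ≤ p, and suppose S̄∖{l} ∈ 𝓕 for every l with l̲ ≤ l ≤ j̄, and S̄∪{l} ∈ 𝓕 for every l with j̄+1 ≤ l ≤ l̄. Then for every S̃ ⊆ {l̲,…,l̄}, the set {1,…,l̲−1} ∪ S̃ belongs to 𝓕. -/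
/-- Characteristic vector of a finite set, as a vector in `ℝ^E` with ground set `E = ℕ`. -/
noncomputable def chiVec (T : Finset ℕ) : ℕ → ℝ := fun e => if e ∈ T then 1 else 0

/-!
Let `S̄ = {1,…,j̄}` and `X = {1,…,l̲−1} ∪ S̃`. Since `χ^T = ∑_{i ∈ T} e_i`, the vectors `χ^{X∪M}`
and `χ^{S̄∪M}` differ by `± e_i` for the elements `i` of their symmetric difference, so it suffices
that each such `e_i` lies in the span. An element of `X ∖ S̄` is some `l ∈ S̃` with `j̄ < l ≤ l̄`, and
`e_l = χ^{S̄∪{l}∪M} − χ^{S̄∪M}`; an element of `S̄ ∖ X` is some `l` with `l̲ ≤ l ≤ j̄`, and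
`e_l = χ^{S̄∪M} − χ^{(S̄∖{l})∪M}`.
-/

open Finset

section

variable {W : Submodule ℝ (ℕ → ℝ)}

theorem chiVec_eq_sum_single (s : Finset ℕ) : chiVec s = ∑ i ∈ s, Pi.single i 1 := by
  funext e
  simp [chiVec, Finset.sum_apply, Pi.single_apply]

theorem chiVec_insert {l : ℕ} {s : Finset ℕ} (hl : l ∉ s) :
    chiVec (insert l s) = Pi.single l 1 + chiVec s := by
  simp only [chiVec_eq_sum_single, sum_insert hl]

theorem chiVec_eq_add_sum_sdiff_sub_sum_sdiff (s t : Finset ℕ) :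
    chiVec s = chiVec t + ∑ i ∈ s \ t, Pi.single i 1 - ∑ i ∈ t \ s, Pi.single i 1 := by
  rw [chiVec_eq_sum_single, chiVec_eq_sum_single, ← sum_inter_add_sum_sdiff s t,
    ← sum_inter_add_sum_sdiff t s, inter_comm]
  abel

theorem single_mem_of_chiVec_insert_mem {l : ℕ} {s : Finset ℕ} (hl : l ∉ s)
    (hs : chiVec s ∈ W) (hins : chiVec (insert l s) ∈ W) : Pi.single l 1 ∈ W := by
  rw [chiVec_insert hl] at hins
  simpa using W.sub_mem hins hs

theorem single_mem_of_chiVec_erase_mem {l : ℕ} {s : Finset ℕ} (hl : l ∈ s)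
    (hs : chiVec s ∈ W) (herase : chiVec (s.erase l) ∈ W) : Pi.single l 1 ∈ W :=
  single_mem_of_chiVec_insert_mem (notMem_erase l s) herase (by rwa [insert_erase hl])

theorem chiVec_mem_of_single_mem_symmDiff {s t : Finset ℕ} (ht : chiVec t ∈ W)
    (hsingle : ∀ i ∈ symmDiff s t, Pi.single i 1 ∈ W) : chiVec s ∈ W := by
  rw [chiVec_eq_add_sum_sdiff_sub_sum_sdiff s t]
  refine W.sub_mem (W.add_mem ht (W.sum_mem fun i hi => hsingle i ?_))
    (W.sum_mem fun i hi => hsingle i ?_) <;>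
  rw [mem_symmDiff] <;> simp_all

end

theorem candidate_sets_in_span_general (Mset : Finset ℕ)
    (V : Finset (ℕ → ℝ))
    (jbar : ℕ)
    (llo lhi : ℕ) (hlo1 : 1 ≤ llo) (hlo2 : llo ≤ jbar + 1)
    (hSbar : chiVec (Finset.Icc 1 jbar ∪ Mset) ∈
      Submodule.span ℝ (V : Set (ℕ → ℝ)))
    (hminus : ∀ l, llo ≤ l → l ≤ jbar →
      chiVec ((Finset.Icc 1 jbar).erase l ∪ Mset) ∈
        Submodule.span ℝ (V : Set (ℕ → ℝ)))
    (hplus : ∀ l, jbar + 1 ≤ l → l ≤ lhi →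
      chiVec (insert l (Finset.Icc 1 jbar) ∪ Mset) ∈
        Submodule.span ℝ (V : Set (ℕ → ℝ))) :
    ∀ St : Finset ℕ, St ⊆ Finset.Icc llo lhi →
      chiVec ((Finset.Icc 1 (llo - 1) ∪ St) ∪ Mset) ∈
        Submodule.span ℝ (V : Set (ℕ → ℝ)) := by
  intro St hSt
  refine chiVec_mem_of_single_mem_symmDiff hSbar fun l hl => ?_
  rcases mem_symmDiff.mp hl with ⟨hlX, hlY⟩ | ⟨hlY, hlX⟩
  · have hlSt : l ∈ St := by
      simp only [mem_union, mem_Icc] at hlX hlY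
      grind
    have hlhi : jbar + 1 ≤ l ∧ l ≤ lhi := by
      have := hSt hlSt
      simp only [mem_union, mem_Icc, not_or, not_and, not_le] at this hlY
      omega
    refine single_mem_of_chiVec_insert_mem hlY hSbar ?_
    simpa only [insert_union] using hplus l hlhi.1 hlhi.2
  · have hlM : l ∉ Mset := fun h => hlX (mem_union_right _ h)
    have hllo : llo ≤ l ∧ l ≤ jbar := by
      simp only [mem_union, mem_Icc, hlM, not_or, not_and, not_le, or_false] at hlX hlY
      omega
    refine single_mem_of_chiVec_erase_mem hlY hSbar ?_
    simpa only [erase_union_distrib, erase_eq_of_notMem hlM] using hminus l hllo.1 hllo.2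

/-- Key linear-algebra step of the separation algorithm: if `S̄ = {1,…,j̄}` and all the
sets `S̄∖{l}` (`l̲ ≤ l ≤ j̄`) and `S̄∪{l}` (`j̄+1 ≤ l ≤ l̄`) have their characteristic
vectors (after union with `M`) in the span of `V`, then so does every set of the form
`{1,…,l̲−1} ∪ S̃` with `S̃ ⊆ {l̲,…,l̄}`. -/
theorem candidate_sets_in_span (E : Finset ℕ) (p : ℕ) (Mset : Finset ℕ)
    (hPE : Finset.Icc 1 p ⊆ E) (hME : Mset ⊆ E)
    (hMP : Mset ∩ Finset.Icc 1 p = ∅)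
    (V : Finset (ℕ → ℝ))
    (jbar : ℕ) (hjp : jbar ≤ p)
    (llo lhi : ℕ) (hlo1 : 1 ≤ llo) (hlo2 : llo ≤ jbar + 1)
    (hhi1 : jbar ≤ lhi) (hhi2 : lhi ≤ p)
    (hSbar : chiVec (Finset.Icc 1 jbar ∪ Mset) ∈
      Submodule.span ℝ (V : Set (ℕ → ℝ)))
    (hminus : ∀ l, llo ≤ l → l ≤ jbar →
      chiVec ((Finset.Icc 1 jbar).erase l ∪ Mset) ∈
        Submodule.span ℝ (V : Set (ℕ → ℝ)))
    (hplus : ∀ l, jbar + 1 ≤ l → l ≤ lhi →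
      chiVec (insert l (Finset.Icc 1 jbar) ∪ Mset) ∈
        Submodule.span ℝ (V : Set (ℕ → ℝ))) :
    ∀ St : Finset ℕ, St ⊆ Finset.Icc llo lhi →
      chiVec ((Finset.Icc 1 (llo - 1) ∪ St) ∪ Mset) ∈
        Submodule.span ℝ (V : Set (ℕ → ℝ)) :=
  candidate_sets_in_span_general Mset V jbar llo lhi hlo1 hlo2 hSbar hminus hplus
end
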